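/- arXiv:1908.08322 — 4 statements merged into one kernel-verified Lean document; each statement's English description precedes it below -/
import Mathlib

section
/- (Theorem 2(i), fluid model) Suppose 0 < T ≤ (λ_a+λ_b)/(2μ_b) and let F_a ≡ 1 and F_b ≡ 1 on [0,T] (all customers of both types arrive at time 0). Then q_0 = (λ_a+λ_b)/2 and for every i ∈ {a,b} and every t ∈ (0,T], q_i(t) = λ_a + λ_b − μ_i t ≥ q_0. Consequently no customer can face a smaller queue by deviating from arrival at time 0, i.e. (F_a,F_b) is a Nash equilibrium of the fluid arrival game. -/
/-- Extension of a cdf `F` defined on `[0,T]` to all of `ℝ`. -/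
noncomputable def Fext (T : ℝ) (F : ℝ → ℝ) (t : ℝ) : ℝ :=
  if t < 0 then 0 else if t ≤ T then F t else F T

/-- Support of the Borel measure on `[0,T]` induced by the cdf `F`:
points every neighbourhood of which carries positive mass. -/
def fluidSupport (T : ℝ) (F : ℝ → ℝ) : Set ℝ :=
  {t | t ∈ Set.Icc 0 T ∧ ∀ ε > 0, Fext T F (t - ε) < Fext T F (t + ε)}

/-- Queue (cost) faced by a belief-`mu` customer arriving at time `t`:
`q_0 = (λ_a F_a(0) + λ_b F_b(0))/2` at the opening, and
`q(t) = λ_a F_a(t) + λ_b F_b(t) - μ t` for `t > 0`. -/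
noncomputable def cost (la lb mu : ℝ) (Fa Fb : ℝ → ℝ) (t : ℝ) : ℝ :=
  if t = 0 then (la * Fa 0 + lb * Fb 0) / 2
  else la * Fa t + lb * Fb t - mu * t

/-- Nash equilibrium of the fluid arrival game: on the support of its own arrival
distribution each type's queue is minimal over all times in `[0,T]`. -/
def IsFluidNash (la lb mua mub T : ℝ) (Fa Fb : ℝ → ℝ) : Prop :=
  (∀ t ∈ fluidSupport T Fa, ∀ s ∈ Set.Icc 0 T,
    cost la lb mua Fa Fb t ≤ cost la lb mua Fa Fb s) ∧
  (∀ t ∈ fluidSupport T Fb, ∀ s ∈ Set.Icc 0 T,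
    cost la lb mub Fa Fb t ≤ cost la lb mub Fa Fb s)

/-- Theorem 2(i) of the fluid model: if `0 < T ≤ (λ_a+λ_b)/(2 μ_b)` and all customers
of both types arrive at time `0`, then `q_0 = (λ_a+λ_b)/2`, for both beliefs
`q_i(t) = λ_a + λ_b - μ_i t ≥ q_0` for `t ∈ (0,T]`, and `(F_a,F_b)` is a Nash
equilibrium of the fluid arrival game. -/
theorem fluid_equilibrium_case_i
    (la lb mua mub T : ℝ)
    (hla : 0 < la) (hlb : 0 < lb) (hmua : 0 < mua) (hmu : mua < mub)
    (hT0 : 0 < T) (hT : T ≤ (la + lb) / (2 * mub))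
    (Fa Fb : ℝ → ℝ)
    (hFa : ∀ t ∈ Set.Icc (0:ℝ) T, Fa t = 1)
    (hFb : ∀ t ∈ Set.Icc (0:ℝ) T, Fb t = 1) :
    (la * Fa 0 + lb * Fb 0) / 2 = (la + lb) / 2 ∧
    (∀ mu ∈ ({mua, mub} : Set ℝ), ∀ t ∈ Set.Ioc (0:ℝ) T,
      la * Fa t + lb * Fb t - mu * t = la + lb - mu * t ∧
      (la + lb) / 2 ≤ la + lb - mu * t) ∧
    IsFluidNash la lb mua mub T Fa Fb := by
  have hmub : 0 < mub := hmua.trans hmu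
  have h0mem : (0:ℝ) ∈ Set.Icc (0:ℝ) T := ⟨le_refl 0, hT0.le⟩
  have hFa0 : Fa 0 = 1 := hFa 0 h0mem
  have hFb0 : Fb 0 = 1 := hFb 0 h0mem
  have hmubT : mub * T ≤ (la + lb) / 2 := by
    have h := mul_le_mul_of_nonneg_left hT hmub.le
    have he : mub * ((la + lb) / (2 * mub)) = (la + lb) / 2 := by
      field_simp
    linarith
  -- key bound: for mu ≤ mub, 0 < t ≤ T, mu*t ≤ (la+lb)/2 when mu > 0
  have key : ∀ mu : ℝ, 0 < mu → mu ≤ mub → ∀ t : ℝ, 0 < t → t ≤ T →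
      (la + lb) / 2 ≤ la + lb - mu * t := by
    intro mu hmu0 hmule t ht0 htT
    have : mu * t ≤ mub * T := mul_le_mul hmule htT ht0.le hmub.le
    linarith
  refine ⟨by rw [hFa0, hFb0]; ring, ?_, ?_, ?_⟩
  · intro mu hmuS t ht
    obtain ⟨ht0, htT⟩ := ht
    have hmem : t ∈ Set.Icc (0:ℝ) T := ⟨ht0.le, htT⟩
    have hmu0 : 0 < mu := by rcases hmuS with h | h <;> simp_all <;> linarith
    have hmule : mu ≤ mub := by rcases hmuS with h | h <;> simp_all <;> linarith
    refine ⟨by rw [hFa t hmem, hFb t hmem]; ring, key mu hmu0 hmule t ht0 htT⟩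
  all_goals {
    intro t ht s hs
    -- show t = 0
    have ht0 : t = 0 := by
      by_contra hne
      have htpos : 0 < t := lt_of_le_of_ne ht.1.1 (Ne.symm hne)
      have := ht.2 (t/2) (by linarith)
      have h1 : Fext T Fa (t - t/2) = 1 ∧ Fext T Fb (t - t/2) = 1 := by
        constructor <;>
        · unfold Fext
          rw [if_neg (by linarith), if_pos (by linarith [ht.1.2])]
          first | exact hFa _ ⟨by linarith, by linarith [ht.1.2]⟩
                | exact hFb _ ⟨by linarith, by linarith [ht.1.2]⟩
      have h2 : Fext T Fa (t + t/2) ≤ 1 ∧ Fext T Fb (t + t/2) ≤ 1 := by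
        constructor <;>
        · unfold Fext
          rw [if_neg (by linarith)]
          split
          · first | exact le_of_eq (hFa _ ⟨by linarith, by linarith⟩)
                  | exact le_of_eq (hFb _ ⟨by linarith, by linarith⟩)
          · first | exact le_of_eq (hFa T ⟨hT0.le, le_refl T⟩)
                  | exact le_of_eq (hFb T ⟨hT0.le, le_refl T⟩)
      first
      | (have ha := ht.2 (t/2) (by linarith)
         rw [h1.1] at ha; linarith [h2.1])
      | (have hb := ht.2 (t/2) (by linarith)
         rw [h1.2] at hb; linarith [h2.2])
    subst ht0
    unfold cost
    rw [if_pos rfl, hFa0, hFb0]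
    by_cases hs0 : s = 0
    · subst hs0; rw [if_pos rfl]
    · rw [if_neg hs0]
      have hspos : 0 < s := lt_of_le_of_ne hs.1 (Ne.symm hs0)
      rw [hFa s hs, hFb s hs]
      have h1 := key mua hmua hmu.le s hspos hs.2
      have h2 := key mub hmub le_rfl s hspos hs.2
      linarith }
end

section
/- (Theorem 2(iii), fluid model) Suppose (λ_a+2λ_b)/(2μ_b) ≤ T ≤ λ_a/(2μ_a) + λ_b/μ_b. Set t_b := T − λ_b/μ_b. Define F_a ≡ 1 on [0,T], and F_b(t) = 0 for t ∈ [0,t_b), F_b(t) = (μ_b/λ_b)(t − t_b) for t ∈ [t_b,T]. Then: 0 < t_b < T; F_b(T) = 1; and with q_0 = λ_a/2 one has q_b(t) = λ_a − μ_b t_b for all t ∈ [t_b,T] with λ_a − μ_b t_b ≤ q_0, q_b(t) = λ_a − μ_b t ≥ λ_a − μ_b t_b for all t ∈ (0,t_b), and q_a(t) ≥ q_0 for all t ∈ (0,T]. Consequently (F_a,F_b) is a Nash equilibrium of the fluid arrival game. -/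
/-!
All type-`a` customers arrive at the opening and face `λ_a/2`. Type `b` start arriving at `t_b` at exactly
the service rate `μ_b`, so their queue is frozen at `λ_a - μ_b t_b` on `[t_b, T]`; before `t_b`
it is `λ_a - μ_b t`, larger still. The lower bound on `T` makes `μ_b t_b ≥ λ_a/2`, so the
`b`-queue at the opening is no better. The upper bound on `T` makes `μ_a t_b ≤ λ_a/2`, and after
`t_b` the `a`-queue grows at rate `μ_b - μ_a > 0`, so no later time beats the opening for `a`.
-/

open Set

theorem cost_zero (la lb mu : ℝ) (Fa Fb : ℝ → ℝ) :
    cost la lb mu Fa Fb 0 = (la * Fa 0 + lb * Fb 0) / 2 :=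
  if_pos rfl

theorem cost_of_ne_zero {la lb mu t : ℝ} (Fa Fb : ℝ → ℝ) (ht : t ≠ 0) :
    cost la lb mu Fa Fb t = la * Fa t + lb * Fb t - mu * t :=
  if_neg ht

theorem le_cost_of_le {la lb mu T m : ℝ} {Fa Fb : ℝ → ℝ}
    (h0 : m ≤ (la * Fa 0 + lb * Fb 0) / 2)
    (hpos : ∀ t ∈ Ioc 0 T, m ≤ la * Fa t + lb * Fb t - mu * t) :
    ∀ s ∈ Icc 0 T, m ≤ cost la lb mu Fa Fb s := by
  intro s hs
  rcases eq_or_lt_of_le hs.1 with rfl | hs0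
  · rwa [cost_zero]
  · rw [cost_of_ne_zero Fa Fb hs0.ne']
    exact hpos s ⟨hs0, hs.2⟩

theorem IsFluidNash.of_le_of_forall_le {la lb mua mub T ma mb : ℝ} {Fa Fb : ℝ → ℝ}
    (ha : ∀ t ∈ fluidSupport T Fa, cost la lb mua Fa Fb t ≤ ma)
    (ha' : ∀ s ∈ Icc 0 T, ma ≤ cost la lb mua Fa Fb s)
    (hb : ∀ t ∈ fluidSupport T Fb, cost la lb mub Fa Fb t ≤ mb)
    (hb' : ∀ s ∈ Icc 0 T, mb ≤ cost la lb mub Fa Fb s) :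
    IsFluidNash la lb mua mub T Fa Fb :=
  ⟨fun t ht s hs => (ha t ht).trans (ha' s hs), fun t ht s hs => (hb t ht).trans (hb' s hs)⟩

section Support

variable {T c s : ℝ} {F : ℝ → ℝ}

theorem Fext_eq_of_nonneg (hT : 0 ≤ T) (hF : ∀ t ∈ Icc 0 T, F t = c) {u : ℝ} (hu : 0 ≤ u) :
    Fext T F u = c := by
  unfold Fext
  split_ifs with hneg hle
  · exact absurd hu (not_le.2 hneg)
  · exact hF u ⟨hu, hle⟩
  · exact hF T ⟨hT, le_rfl⟩

theorem Fext_eq_zero_of_lt (hT : 0 ≤ T) (hF : ∀ t ∈ Icc 0 T, t < s → F t = 0) {u : ℝ}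
    (hu : u < s) : Fext T F u = 0 := by
  unfold Fext
  split_ifs with hneg hle
  · rfl
  · exact hF u ⟨not_lt.1 hneg, hle⟩ hu
  · exact hF T ⟨hT, le_rfl⟩ ((not_le.1 hle).trans hu)

theorem fluidSupport_subset_singleton_zero (hF : ∀ t ∈ Icc 0 T, F t = c) :
    fluidSupport T F ⊆ {0} := by
  rintro t ⟨⟨ht0, htT⟩, hmass⟩
  by_contra hne
  have htpos : 0 < t := lt_of_le_of_ne ht0 (Ne.symm hne)
  have h := hmass (t / 2) (half_pos htpos)
  rw [Fext_eq_of_nonneg (ht0.trans htT) hF (by linarith),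
    Fext_eq_of_nonneg (ht0.trans htT) hF (by linarith)] at h
  exact h.false

theorem fluidSupport_subset_Ici (hF : ∀ t ∈ Icc 0 T, t < s → F t = 0) :
    fluidSupport T F ⊆ Ici s := by
  rintro t ⟨⟨ht0, htT⟩, hmass⟩
  rw [mem_Ici]
  by_contra! hts
  have h := hmass ((s - t) / 2) (by linarith)
  rw [Fext_eq_zero_of_lt (ht0.trans htT) hF (by linarith),
    Fext_eq_zero_of_lt (ht0.trans htT) hF (by linarith)] at h
  exact h.false

end Support

namespace FluidCaseIII

variable {la lb mua mub T tb : ℝ} {Fa Fb : ℝ → ℝ}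

theorem half_le_mul_tb (hmub : 0 < mub) (hT1 : (la + 2 * lb) / (2 * mub) ≤ T)
    (htb : tb = T - lb / mub) : la / 2 ≤ mub * tb := by
  have h : la / (2 * mub) ≤ tb := by
    rw [htb]
    calc la / (2 * mub) = (la + 2 * lb) / (2 * mub) - lb / mub := by field_simp; ring
      _ ≤ T - lb / mub := by linarith
  rw [div_le_iff₀ (by positivity)] at h
  linarith

theorem mul_tb_le_half (hmua : 0 < mua) (hT2 : T ≤ la / (2 * mua) + lb / mub)
    (htb : tb = T - lb / mub) : mua * tb ≤ la / 2 := by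
  have h : tb ≤ la / (2 * mua) := by rw [htb]; linarith
  rw [le_div_iff₀ (by positivity)] at h
  linarith

theorem queue_of_lt (mu : ℝ) (hFa : ∀ t ∈ Icc (0:ℝ) T, Fa t = 1)
    (hFb1 : ∀ t ∈ Icc (0:ℝ) T, t < tb → Fb t = 0) {t : ℝ} (ht : t ∈ Icc 0 T) (htb : t < tb) :
    la * Fa t + lb * Fb t - mu * t = la - mu * t := by
  rw [hFa t ht, hFb1 t ht htb]; ring

theorem queue_of_le (mu : ℝ) (hlb : lb ≠ 0) (hFa : ∀ t ∈ Icc (0:ℝ) T, Fa t = 1)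
    (hFb2 : ∀ t ∈ Icc (0:ℝ) T, tb ≤ t → Fb t = (mub / lb) * (t - tb)) {t : ℝ}
    (ht : t ∈ Icc 0 T) (htb : tb ≤ t) :
    la * Fa t + lb * Fb t - mu * t = la - mu * tb + (mub - mu) * (t - tb) := by
  rw [hFa t ht, hFb2 t ht htb]; field_simp; ring

theorem queue_b_lower_bound (hmub : 0 ≤ mub) (hlb : lb ≠ 0) (hFa : ∀ t ∈ Icc (0:ℝ) T, Fa t = 1)
    (hFb1 : ∀ t ∈ Icc (0:ℝ) T, t < tb → Fb t = 0)
    (hFb2 : ∀ t ∈ Icc (0:ℝ) T, tb ≤ t → Fb t = (mub / lb) * (t - tb)) :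
    ∀ t ∈ Ioc 0 T, la - mub * tb ≤ la * Fa t + lb * Fb t - mub * t := by
  intro t ⟨ht0, htT⟩
  rcases lt_or_ge t tb with htb | htb
  · rw [queue_of_lt mub hFa hFb1 ⟨ht0.le, htT⟩ htb]
    linarith [mul_le_mul_of_nonneg_left htb.le hmub]
  · rw [queue_of_le mub hlb hFa hFb2 ⟨ht0.le, htT⟩ htb]
    linarith

theorem queue_a_lower_bound (hmua : 0 ≤ mua) (hmu : mua ≤ mub) (hmua_tb : mua * tb ≤ la / 2)
    (hlb : lb ≠ 0) (hFa : ∀ t ∈ Icc (0:ℝ) T, Fa t = 1)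
    (hFb1 : ∀ t ∈ Icc (0:ℝ) T, t < tb → Fb t = 0)
    (hFb2 : ∀ t ∈ Icc (0:ℝ) T, tb ≤ t → Fb t = (mub / lb) * (t - tb)) :
    ∀ t ∈ Ioc 0 T, la / 2 ≤ la * Fa t + lb * Fb t - mua * t := by
  intro t ⟨ht0, htT⟩
  rcases lt_or_ge t tb with htb | htb
  · rw [queue_of_lt mua hFa hFb1 ⟨ht0.le, htT⟩ htb]
    linarith [mul_le_mul_of_nonneg_left htb.le hmua]
  · rw [queue_of_le mua hlb hFa hFb2 ⟨ht0.le, htT⟩ htb]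
    nlinarith [mul_nonneg (sub_nonneg.2 hmu) (sub_nonneg.2 htb)]

end FluidCaseIII

open FluidCaseIII

/-- Theorem 2(iii) of the fluid model: for `(λ_a+2λ_b)/(2μ_b) ≤ T ≤ λ_a/(2μ_a)+λ_b/μ_b`,
all type-`a` customers arrive at `0`, and type-`b` customers arrive with density
`μ_b/λ_b` on `[t_b,T]` where `t_b = T - λ_b/μ_b`; this is a Nash equilibrium. -/
theorem fluid_equilibrium_case_iii
    (la lb mua mub T tb : ℝ)
    (hla : 0 < la) (hlb : 0 < lb) (hmua : 0 < mua) (hmu : mua < mub)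
    (hT1 : (la + 2 * lb) / (2 * mub) ≤ T) (hT2 : T ≤ la / (2 * mua) + lb / mub)
    (htb : tb = T - lb / mub)
    (Fa Fb : ℝ → ℝ)
    (hFa : ∀ t ∈ Set.Icc (0:ℝ) T, Fa t = 1)
    (hFb1 : ∀ t ∈ Set.Icc (0:ℝ) T, t < tb → Fb t = 0)
    (hFb2 : ∀ t ∈ Set.Icc (0:ℝ) T, tb ≤ t → Fb t = (mub / lb) * (t - tb)) :
    0 < tb ∧ tb < T ∧ Fb T = 1 ∧
    (la * Fa 0 + lb * Fb 0) / 2 = la / 2 ∧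
    (∀ t ∈ Set.Icc tb T,
      la * Fa t + lb * Fb t - mub * t = la - mub * tb) ∧
    la - mub * tb ≤ la / 2 ∧
    (∀ t ∈ Set.Ioo (0:ℝ) tb,
      la * Fa t + lb * Fb t - mub * t = la - mub * t ∧
      la - mub * tb ≤ la - mub * t) ∧
    (∀ t ∈ Set.Ioc (0:ℝ) T,
      la / 2 ≤ la * Fa t + lb * Fb t - mua * t) ∧
    IsFluidNash la lb mua mub T Fa Fb := by
  have hmub : 0 < mub := hmua.trans hmu
  have hmub_tb : la / 2 ≤ mub * tb := half_le_mul_tb hmub hT1 htb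
  have htb0 : 0 < tb := (mul_pos_iff_of_pos_left hmub).1 (by linarith)
  have htbT : tb < T := by rw [htb]; exact sub_lt_self T (div_pos hlb hmub)
  have hT : 0 ≤ T := htb0.le.trans htbT.le
  have hq0 : (la * Fa 0 + lb * Fb 0) / 2 = la / 2 := by
    rw [hFa 0 ⟨le_rfl, hT⟩, hFb1 0 ⟨le_rfl, hT⟩ htb0]; ring
  have hqb_flat : ∀ t ∈ Icc tb T, la * Fa t + lb * Fb t - mub * t = la - mub * tb := by
    intro t ht
    rw [queue_of_le mub hlb.ne' hFa hFb2 ⟨htb0.le.trans ht.1, ht.2⟩ ht.1]; ring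
  have hqa := queue_a_lower_bound hmua.le hmu.le (mul_tb_le_half hmua hT2 htb) hlb.ne' hFa hFb1 hFb2
  refine ⟨htb0, htbT, ?_, hq0, hqb_flat, by linarith, fun t ht => ?_, hqa,
    IsFluidNash.of_le_of_forall_le (ma := la / 2) (mb := la - mub * tb) (fun t ht => ?_)
      (le_cost_of_le hq0.ge hqa) (fun t ht => ?_)
      (le_cost_of_le (by linarith) (queue_b_lower_bound hmub.le hlb.ne' hFa hFb1 hFb2))⟩
  · rw [hFb2 T ⟨hT, le_rfl⟩ htbT.le, htb]; field_simp; ring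
  · refine ⟨queue_of_lt mub hFa hFb1 ⟨ht.1.le, ht.2.le.trans htbT.le⟩ ht.2, ?_⟩
    linarith [mul_le_mul_of_nonneg_left ht.2.le hmub.le]
  · rw [fluidSupport_subset_singleton_zero hFa ht, cost_zero, hq0]
  · have htb_le : tb ≤ t := fluidSupport_subset_Ici hFb1 ht
    rw [cost_of_ne_zero Fa Fb (htb0.trans_le htb_le).ne', hqb_flat t ⟨htb_le, ht.1.2⟩]
end

section
/- (Theorem 2(vi), fluid model) Suppose T ≥ λ_a/μ_a + λ_b/μ_b. Set T_a := λ_a/μ_a and T_b := T_a + λ_b/μ_b. Define F_a(t) := min{1, μ_a t/λ_a} for t ∈ [0,T], and F_b(t) := 0 for t ∈ [0,T_a], F_b(t) := min{1, (μ_b/λ_b)(t − T_a)} for t ∈ [T_a,T]. Then F_a(T_a) = 1, F_b(T_b) = 1, λ_a F_a(t) + λ_b F_b(t) = μ_a t for all t ∈ [0,T_a], and λ_a F_a(t) + λ_b F_b(t) ≤ μ_b t for all t ∈ [0,T]. Consequently the belief-a queue is empty throughout the support of F_a and the belief-b queue is empty throughout [0,T], so (F_a,F_b) is a (degenerate) Nash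 equilibrium in which every customer expects zero delay and a queue is never formed. -/
/-- Queue (cost) faced by a belief-`mu` customer at time `t`, accounting for the
possibility that the belief-`mu` queue is empty (waiting time zero) when the
cumulative input does not exceed the processed work. -/
noncomputable def costE (la lb mu : ℝ) (Fa Fb : ℝ → ℝ) (t : ℝ) : ℝ :=
  if t = 0 then (la * Fa 0 + lb * Fb 0) / 2
  else max 0 (la * Fa t + lb * Fb t - mu * t)

/-- Nash equilibrium of the fluid arrival game, with the cost accounting for
emptiness of the believed queue. -/
def IsFluidNashE (la lb mua mub T : ℝ) (Fa Fb : ℝ → ℝ) : Prop :=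
  (∀ t ∈ fluidSupport T Fa, ∀ s ∈ Set.Icc 0 T,
    costE la lb mua Fa Fb t ≤ costE la lb mua Fa Fb s) ∧
  (∀ t ∈ fluidSupport T Fb, ∀ s ∈ Set.Icc 0 T,
    costE la lb mub Fa Fb t ≤ costE la lb mub Fa Fb s)

open Set

section Costs

variable {la lb mu mua mub T : ℝ} {Fa Fb : ℝ → ℝ}

lemma costE_nonneg (h0 : 0 ≤ la * Fa 0 + lb * Fb 0) (t : ℝ) : 0 ≤ costE la lb mu Fa Fb t := by
  unfold costE
  split_ifs
  · exact div_nonneg h0 zero_le_two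
  · exact le_max_left _ _

lemma costE_eq_zero_of_load_le (h0 : la * Fa 0 + lb * Fb 0 = 0) {t : ℝ}
    (ht : la * Fa t + lb * Fb t ≤ mu * t) : costE la lb mu Fa Fb t = 0 := by
  unfold costE
  split_ifs
  · rw [h0, zero_div]
  · exact max_eq_left (sub_nonpos.2 ht)

lemma isFluidNashE_of_costE_eq_zero (h0 : 0 ≤ la * Fa 0 + lb * Fb 0)
    (ha : ∀ t ∈ fluidSupport T Fa, costE la lb mua Fa Fb t = 0)
    (hb : ∀ t ∈ fluidSupport T Fb, costE la lb mub Fa Fb t = 0) :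
    IsFluidNashE la lb mua mub T Fa Fb :=
  ⟨fun t ht _ _ => (ha t ht).symm ▸ costE_nonneg h0 _,
    fun t ht _ _ => (hb t ht).symm ▸ costE_nonneg h0 _⟩

end Costs

section Support

variable {T a : ℝ} {F : ℝ → ℝ}

lemma Fext_eq_of_le (ha : 0 ≤ a) (haT : a ≤ T) (hF : ∀ s ∈ Icc a T, F s = F a) {s : ℝ}
    (hs : a ≤ s) : Fext T F s = F a := by
  unfold Fext
  rw [if_neg (by linarith)]
  split_ifs with hsT
  · exact hF s ⟨hs, hsT⟩
  · exact hF T ⟨haT, le_rfl⟩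

lemma fluidSupport_subset_Icc_of_eqOn (ha : 0 ≤ a) (hF : ∀ s ∈ Icc a T, F s = F a) :
    fluidSupport T F ⊆ Icc 0 a := by
  rintro t ⟨⟨ht0, htT⟩, hinc⟩
  refine ⟨ht0, not_lt.1 fun hat => ?_⟩
  have haT : a ≤ T := hat.le.trans htT
  have h := hinc (t - a) (sub_pos.2 hat)
  rw [Fext_eq_of_le ha haT hF (by linarith), Fext_eq_of_le ha haT hF (by linarith)] at h
  exact lt_irrefl _ h

end Support

lemma min_one_mul_div_eq_self {l m t : ℝ} (hl : 0 < l) (hm : 0 < m) (ht : t ≤ l / m) :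
    min 1 (m * t / l) = m * t / l := by
  rw [le_div_iff₀ hm] at ht
  exact min_eq_right ((div_le_one hl).2 (by linarith))

lemma min_one_mul_div_eq_one {l m t : ℝ} (hl : 0 < l) (hm : 0 < m) (ht : l / m ≤ t) :
    min 1 (m * t / l) = 1 := by
  rw [div_le_iff₀ hm] at ht
  exact min_eq_left ((one_le_div hl).2 (by linarith))

section Profile

variable {la lb mua mub T Ta : ℝ} {Fa Fb : ℝ → ℝ}

lemma load_eq_of_le_Ta (hla : 0 < la) (hmua : 0 < mua) (hTa : Ta = la / mua) (hTaT : Ta ≤ T)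
    (hFa : ∀ t ∈ Icc (0:ℝ) T, Fa t = min 1 (mua * t / la))
    (hFb1 : ∀ t ∈ Icc (0:ℝ) T, t ≤ Ta → Fb t = 0)
    {t : ℝ} (ht : t ∈ Icc 0 Ta) : la * Fa t + lb * Fb t = mua * t := by
  have htT : t ∈ Icc 0 T := ⟨ht.1, ht.2.trans hTaT⟩
  rw [hFa t htT, hFb1 t htT ht.2, min_one_mul_div_eq_self hla hmua (hTa ▸ ht.2)]
  field_simp
  ring

lemma load_le_of_Ta_lt (hla : 0 < la) (hlb : 0 < lb) (hmua : 0 < mua) (hmu : mua < mub)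
    (hTa : Ta = la / mua)
    (hFa : ∀ t ∈ Icc (0:ℝ) T, Fa t = min 1 (mua * t / la))
    (hFb2 : ∀ t ∈ Icc (0:ℝ) T, Ta ≤ t → Fb t = min 1 ((mub / lb) * (t - Ta)))
    {t : ℝ} (ht : t ∈ Icc 0 T) (hTat : Ta < t) : la * Fa t + lb * Fb t ≤ mub * t := by
  rw [hFa t ht, hFb2 t ht hTat.le, min_one_mul_div_eq_one hla hmua (hTa ▸ hTat.le)]
  have hla_le : la ≤ mub * Ta := by
    rw [hTa, mul_div_assoc', le_div_iff₀ hmua]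
    nlinarith
  have hFb_le : lb * min 1 (mub / lb * (t - Ta)) ≤ mub * (t - Ta) :=
    calc lb * min 1 (mub / lb * (t - Ta)) ≤ lb * (mub / lb * (t - Ta)) :=
          mul_le_mul_of_nonneg_left (min_le_right _ _) hlb.le
      _ = mub * (t - Ta) := by field_simp
  linarith

end Profile

/-- Theorem 2(vi) of the fluid model: if `T ≥ λ_a/μ_a + λ_b/μ_b`, the profile where
type `a` arrives uniformly at rate `μ_a/λ_a` on `[0,T_a]` and type `b` at rate
`μ_b/λ_b` on `[T_a,T_b]` keeps both believed queues empty and is a (degenerate)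
Nash equilibrium with zero delays. -/
theorem fluid_equilibrium_case_vi
    (la lb mua mub T Ta Tb : ℝ)
    (hla : 0 < la) (hlb : 0 < lb) (hmua : 0 < mua) (hmu : mua < mub)
    (hT : la / mua + lb / mub ≤ T)
    (hTa : Ta = la / mua) (hTb : Tb = Ta + lb / mub)
    (Fa Fb : ℝ → ℝ)
    (hFa : ∀ t ∈ Set.Icc (0:ℝ) T, Fa t = min 1 (mua * t / la))
    (hFb1 : ∀ t ∈ Set.Icc (0:ℝ) T, t ≤ Ta → Fb t = 0)
    (hFb2 : ∀ t ∈ Set.Icc (0:ℝ) T, Ta ≤ t → Fb t = min 1 ((mub / lb) * (t - Ta))) :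
    Fa Ta = 1 ∧ Fb Tb = 1 ∧
    (∀ t ∈ Set.Icc (0:ℝ) Ta, la * Fa t + lb * Fb t = mua * t) ∧
    (∀ t ∈ Set.Icc (0:ℝ) T, la * Fa t + lb * Fb t ≤ mub * t) ∧
    (∀ t ∈ fluidSupport T Fa, costE la lb mua Fa Fb t = 0) ∧
    (∀ t ∈ Set.Icc (0:ℝ) T, costE la lb mub Fa Fb t = 0) ∧
    IsFluidNashE la lb mua mub T Fa Fb := by
  have hmub : 0 < mub := hmua.trans hmu
  have hTa0 : 0 ≤ Ta := hTa ▸ (div_pos hla hmua).le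
  have hTbT : Tb ≤ T := by rw [hTb, hTa]; exact hT
  have hTaTb : Ta ≤ Tb := by rw [hTb]; linarith [div_pos hlb hmub]
  have hTaT : Ta ≤ T := hTaTb.trans hTbT
  have hFa_one : ∀ s ∈ Icc Ta T, Fa s = 1 := fun s hs =>
    (hFa s ⟨hTa0.trans hs.1, hs.2⟩).trans (min_one_mul_div_eq_one hla hmua (hTa ▸ hs.1))
  have hFbTb : Fb Tb = 1 := by
    rw [hFb2 Tb ⟨hTa0.trans hTaTb, hTbT⟩ hTaTb, hTb, add_sub_cancel_left,
      div_mul_div_cancel₀ hlb.ne', div_self hmub.ne', min_self]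
  have hload_a : ∀ t ∈ Icc (0:ℝ) Ta, la * Fa t + lb * Fb t = mua * t :=
    fun t ht => load_eq_of_le_Ta hla hmua hTa hTaT hFa hFb1 ht
  have hload_b : ∀ t ∈ Icc (0:ℝ) T, la * Fa t + lb * Fb t ≤ mub * t := by
    intro t ht
    rcases le_or_gt t Ta with htTa | hTat
    · exact (hload_a t ⟨ht.1, htTa⟩).trans_le (mul_le_mul_of_nonneg_right hmu.le ht.1)
    · exact load_le_of_Ta_lt hla hlb hmua hmu hTa hFa hFb2 ht hTat
  have h0 : la * Fa 0 + lb * Fb 0 = 0 := by simpa using hload_a 0 ⟨le_rfl, hTa0⟩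
  have hsupp : fluidSupport T Fa ⊆ Icc 0 Ta := fluidSupport_subset_Icc_of_eqOn hTa0
    fun s hs => (hFa_one s hs).trans (hFa_one Ta ⟨le_rfl, hTaT⟩).symm
  have hcost_a : ∀ t ∈ fluidSupport T Fa, costE la lb mua Fa Fb t = 0 :=
    fun t ht => costE_eq_zero_of_load_le h0 (hload_a t (hsupp ht)).le
  have hcost_b : ∀ t ∈ Icc (0:ℝ) T, costE la lb mub Fa Fb t = 0 :=
    fun t ht => costE_eq_zero_of_load_le h0 (hload_b t ht)
  exact ⟨hFa_one Ta ⟨le_rfl, hTaT⟩, hFbTb, hload_a, hload_b, hcost_a, hcost_b,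
    isFluidNashE_of_costE_eq_zero h0.ge hcost_a fun t ht => hcost_b t ht.1⟩
end

section
/- (Pathwise workload dominance; core of Lemma 1 and Appendix Lemma) Let T > 0 and let X, Y : [0,T] → ℝ be functions that are bounded on [0,T]. Define the (one-sided Skorokhod) reflected processes V_X(t) := X(t) + max(0, sup_{s ∈ [0,t]} (−X(s))) and V_Y(t) := Y(t) + max(0, sup_{s ∈ [0,t]} (−Y(s))). If the difference D := X − Y is nonnegative and nondecreasing on [0,T], then V_X(t) ≥ V_Y(t) for every t ∈ [0,T]. (Applied with X(t) = A_a(t) − t and Y(t) = A_b(t) − t, where A_a, A_b are cumulative work-input paths whose difference is nonnegative and nondecreasing—as for coupled exponential job sizes X_{a,k} = (μ_b/μ_a)X_{b,k} with μ_a < μ_b arriving at the same times—this yields that the virtual waiting time under belief a dominates the one under belief b pathwise.) -/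
/-- Pathwise workload dominance (core of Lemma 1). For bounded paths `X, Y` on `[0,T]`,
let `V_X(t) = X(t) + max(0, sup_{s ∈ [0,t]} (-X(s)))` be the one-sided Skorokhod
reflection of `X` (and similarly `V_Y`). If `X - Y` is nonnegative and nondecreasing
on `[0,T]`, then `V_X(t) ≥ V_Y(t)` for every `t ∈ [0,T]`. -/
theorem reflected_workload_dominance
    (T : ℝ) (hT : 0 < T) (X Y : ℝ → ℝ)
    (hXbdd : ∃ C : ℝ, ∀ t ∈ Set.Icc (0:ℝ) T, |X t| ≤ C)
    (hYbdd : ∃ C : ℝ, ∀ t ∈ Set.Icc (0:ℝ) T, |Y t| ≤ C)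
    (hnonneg : ∀ t ∈ Set.Icc (0:ℝ) T, 0 ≤ X t - Y t)
    (hmono : MonotoneOn (fun t => X t - Y t) (Set.Icc 0 T)) :
    ∀ t ∈ Set.Icc (0:ℝ) T,
      Y t + max 0 (sSup ((fun s => -Y s) '' Set.Icc 0 t)) ≤
      X t + max 0 (sSup ((fun s => -X s) '' Set.Icc 0 t)) := by
  obtain ⟨C, hC⟩ := hXbdd
  intro t ht
  obtain ⟨ht0, htT⟩ := ht
  have hsub : Set.Icc (0:ℝ) t ⊆ Set.Icc 0 T := Set.Icc_subset_Icc le_rfl htT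
  have hD : 0 ≤ X t - Y t := hnonneg t ⟨ht0, htT⟩
  -- bddAbove for the X-image
  have hbddX : BddAbove ((fun s => -X s) '' Set.Icc 0 t) := by
    refine ⟨C, ?_⟩
    rintro _ ⟨s, hs, rfl⟩
    have h := (abs_le.mp (hC s (hsub hs))).1
    show -X s ≤ C
    linarith
  have hne : ((fun s => -Y s) '' Set.Icc 0 t).Nonempty :=
    ⟨-Y 0, 0, ⟨le_rfl, ht0⟩, rfl⟩
  -- sup(-Y) ≤ sup(-X) + (X t - Y t)
  have hkey : sSup ((fun s => -Y s) '' Set.Icc 0 t) ≤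
      sSup ((fun s => -X s) '' Set.Icc 0 t) + (X t - Y t) := by
    apply csSup_le hne
    rintro _ ⟨s, hs, rfl⟩
    have h1 : -X s ≤ sSup ((fun s => -X s) '' Set.Icc 0 t) :=
      le_csSup hbddX ⟨s, hs, rfl⟩
    have h2 : X s - Y s ≤ X t - Y t :=
      hmono (hsub hs) ⟨ht0, htT⟩ hs.2
    simp only
    linarith
  have hmax : max 0 (sSup ((fun s => -Y s) '' Set.Icc 0 t)) ≤
      max 0 (sSup ((fun s => -X s) '' Set.Icc 0 t)) + (X t - Y t) := by
    rcases le_total (sSup ((fun s => -Y s) '' Set.Icc 0 t)) 0 with h | h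
    · simp [max_eq_left h]
      positivity
    · rw [max_eq_right h]
      have := le_max_right (0:ℝ) (sSup ((fun s => -X s) '' Set.Icc 0 t))
      exact hkey.trans (by linarith)
  linarith
end
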